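/- Let 0<p_B≤p_A<1, π=p_A−p_B and g>0. Given ψ_0∈(−∞,0], the ordinary differential equation ψ'=p_B(e^{gψ}−1)/g−p_Aψ has a unique solution ψ on [0,+∞) with ψ(0)=ψ_0, and this solution satisfies ψ_0 ≤ ψ(t)e^{πt} ≤ 0 for all t≥0. -/

import Mathlib

/-!
Write `F u = p_B (e^{g u} - 1) / g - p_A u`. Clamping the state to `[ψ₀, 0]` turns `F` into a
bounded, globally Lipschitz field, so Picard–Lindelöf solves the clamped equation on every
`[0, n]` and the pieces glue to a solution on `[0, ∞)`. Since `F ψ₀ ≥ 0 = F 0`, barrier arguments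
keep this solution in `[ψ₀, 0]`, where the clamp has no effect. Uniqueness holds because `F` is
`C¹`, hence Lipschitz on the compact range of any two solutions over `[0, t]`. Finally
`e^x - 1 ≥ x` gives `F u ≥ -π u`, so `ψ(t) e^{πt}` is nondecreasing and starts at `ψ₀`, while
`ψ ≤ 0` bounds it above by `0`.
-/

open Set Real
open scoped NNReal

section Autonomous

variable {E : Type*} [NormedAddCommGroup E] [NormedSpace ℝ E] {v : E → E}

theorem eqOn_Icc_of_hasDerivWithinAt_of_locallyLipschitz (hv : LocallyLipschitz v)
    {f g : ℝ → E} {a b : ℝ}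
    (hf : ∀ t ∈ Icc a b, HasDerivWithinAt f (v (f t)) (Icc a b) t)
    (hg : ∀ t ∈ Icc a b, HasDerivWithinAt g (v (g t)) (Icc a b) t) (ha : f a = g a) :
    EqOn f g (Icc a b) := by
  have hfc : ContinuousOn f (Icc a b) := fun t ht => (hf t ht).continuousWithinAt
  have hgc : ContinuousOn g (Icc a b) := fun t ht => (hg t ht).continuousWithinAt
  have hK : IsCompact (f '' Icc a b ∪ g '' Icc a b) :=
    (isCompact_Icc.image_of_continuousOn hfc).union (isCompact_Icc.image_of_continuousOn hgc)
  obtain ⟨L, hL⟩ := hv.locallyLipschitzOn.exists_lipschitzOnWith_of_compact hK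
  have deriv_Ici {h : ℝ → E} (hh : ∀ t ∈ Icc a b, HasDerivWithinAt h (v (h t)) (Icc a b) t)
      (t : ℝ) (ht : t ∈ Ico a b) : HasDerivWithinAt h (v (h t)) (Ici t) t :=
    (hh t (Ico_subset_Icc_self ht)).mono_of_mem_nhdsWithin
      (Filter.mem_of_superset (Icc_mem_nhdsGE ht.2) (Icc_subset_Icc_left ht.1))
  exact ODE_solution_unique_of_mem_Icc_right (s := fun _ => f '' Icc a b ∪ g '' Icc a b)
    (fun _ _ => hL) hfc (deriv_Ici hf) (fun t ht => .inl ⟨t, Ico_subset_Icc_self ht, rfl⟩)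
    hgc (deriv_Ici hg) (fun t ht => .inr ⟨t, Ico_subset_Icc_self ht, rfl⟩) ha

theorem eqOn_Ici_of_hasDerivWithinAt_of_locallyLipschitz (hv : LocallyLipschitz v)
    {f g : ℝ → E} {a : ℝ}
    (hf : ∀ t ∈ Ici a, HasDerivWithinAt f (v (f t)) (Ici a) t)
    (hg : ∀ t ∈ Ici a, HasDerivWithinAt g (v (g t)) (Ici a) t) (ha : f a = g a) :
    EqOn f g (Ici a) := fun _ ht =>
  eqOn_Icc_of_hasDerivWithinAt_of_locallyLipschitz hv
    (fun s hs => (hf s hs.1).mono Icc_subset_Ici_self)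
    (fun s hs => (hg s hs.1).mono Icc_subset_Ici_self) ha ⟨ht, le_rfl⟩

variable [CompleteSpace E] {K C : ℝ≥0}

theorem exists_forall_mem_Icc_hasDerivWithinAt_of_lipschitzWith_of_norm_le
    (hv : LipschitzWith K v) (hC : ∀ x, ‖v x‖ ≤ C) (x₀ : E) (T : ℝ≥0) :
    ∃ f : ℝ → E, f 0 = x₀ ∧ ∀ t ∈ Icc 0 (T : ℝ), HasDerivWithinAt f (v (f t)) (Icc 0 T) t :=
  IsPicardLindelof.exists_eq_forall_mem_Icc_hasDerivWithinAt₀ (f := fun _ => v)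
    (t₀ := ⟨0, le_rfl, T.2⟩) (x₀ := x₀) (a := C * T) (L := C)
    { lipschitzOnWith := fun _ _ => hv.lipschitzOnWith
      continuousOn := fun _ _ => continuousOn_const
      norm_le := fun _ _ x _ => hC x
      mul_max_le := by simp }

theorem exists_forall_mem_Ici_hasDerivWithinAt_of_lipschitzWith_of_norm_le
    (hv : LipschitzWith K v) (hC : ∀ x, ‖v x‖ ≤ C) (x₀ : E) :
    ∃ f : ℝ → E, f 0 = x₀ ∧ ∀ t ∈ Ici (0 : ℝ), HasDerivWithinAt f (v (f t)) (Ici 0) t := by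
  choose sol hsol₀ hsol using fun n : ℕ =>
    exists_forall_mem_Icc_hasDerivWithinAt_of_lipschitzWith_of_norm_le hv hC x₀ n
  simp only [NNReal.coe_natCast] at hsol
  have hcons {m n : ℕ} (hmn : m ≤ n) : EqOn (sol n) (sol m) (Icc 0 m) := by
    have hsub : Icc (0 : ℝ) m ⊆ Icc 0 n := Icc_subset_Icc_right (by exact_mod_cast hmn)
    exact eqOn_Icc_of_hasDerivWithinAt_of_locallyLipschitz hv.locallyLipschitz
      (fun t ht => (hsol n t (hsub ht)).mono hsub) (hsol m) ((hsol₀ n).trans (hsol₀ m).symm)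
  set f : ℝ → E := fun t => sol (⌊t⌋₊ + 1) t
  have hf (n : ℕ) : EqOn f (sol n) (Icc 0 n) := by
    intro t ht
    have htn : t ≤ ((⌊t⌋₊ + 1 : ℕ) : ℝ) := by push_cast; exact (Nat.lt_floor_add_one t).le
    rcases le_total (⌊t⌋₊ + 1) n with h | h
    · exact (hcons h ⟨ht.1, htn⟩).symm
    · exact hcons h ht
  refine ⟨f, hsol₀ _, fun t ht => ?_⟩
  have htn : t < ((⌊t⌋₊ + 1 : ℕ) : ℝ) := by push_cast; exact Nat.lt_floor_add_one t
  have hmem : t ∈ Icc (0 : ℝ) (⌊t⌋₊ + 1 : ℕ) := ⟨ht, htn.le⟩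
  refine ((hsol _ t hmem).congr_of_mem (hf _) hmem).mono_of_mem_nhdsWithin ?_
  exact mem_nhdsWithin.2 ⟨Iio _, isOpen_Iio, htn, fun s hs => ⟨hs.2, hs.1.le⟩⟩

end Autonomous

section Invariance

variable {f f' : ℝ → ℝ} {a c : ℝ}

/-- `f` cannot cross the barriers `c + ε (t - a)`; then let `ε → 0`. -/
theorem le_of_hasDerivWithinAt_Ici_of_deriv_nonpos
    (hf : ∀ t ∈ Ici a, HasDerivWithinAt f (f' t) (Ici a) t)
    (hf' : ∀ t ∈ Ici a, c ≤ f t → f' t ≤ 0) (ha : f a ≤ c) : ∀ t ∈ Ici a, f t ≤ c := by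
  intro t ht
  have barrier (ε : ℝ) (hε : 0 < ε) : f t ≤ c + ε * (t - a) := by
    refine image_le_of_deriv_right_lt_deriv_boundary (B := fun s => c + ε * (s - a))
      (fun s hs => (hf s hs.1).continuousWithinAt.mono Icc_subset_Ici_self)
      (fun s hs => (hf s hs.1).mono (Ici_subset_Ici.2 hs.1)) (by simpa using ha)
      (fun s => ((hasDerivAt_id s).sub_const a).const_mul ε |>.const_add c) ?_ ⟨ht, le_rfl⟩
    intro s hs hfs
    have : c ≤ f s := hfs ▸ le_add_of_nonneg_right (mul_nonneg hε.le (sub_nonneg.2 hs.1))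
    simpa using (hf' s hs.1 this).trans_lt hε
  refine le_of_forall_pos_le_add fun δ hδ => ?_
  have hta : 0 < t - a + 1 := by linarith [mem_Ici.1 ht]
  calc f t ≤ c + δ / (t - a + 1) * (t - a) := barrier _ (by positivity)
    _ ≤ c + δ / (t - a + 1) * (t - a + 1) := by gcongr; linarith
    _ = c + δ := by rw [div_mul_cancel₀ _ hta.ne']

theorem le_of_hasDerivWithinAt_Ici_of_deriv_nonneg
    (hf : ∀ t ∈ Ici a, HasDerivWithinAt f (f' t) (Ici a) t)
    (hf' : ∀ t ∈ Ici a, f t ≤ c → 0 ≤ f' t) (ha : c ≤ f a) : ∀ t ∈ Ici a, c ≤ f t := by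
  intro t ht
  simpa using le_of_hasDerivWithinAt_Ici_of_deriv_nonpos (f := -f) (f' := -f') (c := -c)
    (fun s hs => (hf s hs).neg) (fun s hs h => by simpa using hf' s hs (by simpa using h))
    (by simpa using ha) t ht

end Invariance

theorem exists_forall_mem_Ici_hasDerivWithinAt_of_mem_Icc {v : ℝ → ℝ} (hv : LocallyLipschitz v)
    {a b x₀ : ℝ} (hx₀ : x₀ ∈ Icc a b) (ha : 0 ≤ v a) (hb : v b ≤ 0) :
    ∃ f : ℝ → ℝ, f 0 = x₀ ∧
      ∀ t ∈ Ici (0 : ℝ), f t ∈ Icc a b ∧ HasDerivWithinAt f (v (f t)) (Ici 0) t := by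
  have hab : a ≤ b := hx₀.1.trans hx₀.2
  set w : ℝ → ℝ := IccExtend hab fun x => v x
  obtain ⟨K, hK⟩ := hv.locallyLipschitzOn.exists_lipschitzOnWith_of_compact isCompact_Icc
  obtain ⟨C, hC⟩ := isCompact_Icc.exists_bound_of_continuousOn (s := Icc a b)
    hv.continuous.continuousOn
  have hw : LipschitzWith (K * 1) w := hK.to_restrict.comp (LipschitzWith.projIcc hab)
  have hwa (x : ℝ) (hx : x ≤ a) : w x = v a := IccExtend_of_le_left hab _ hx
  have hwb (x : ℝ) (hx : b ≤ x) : w x = v b := IccExtend_of_right_le hab _ hx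
  have hwv (x : ℝ) (hx : x ∈ Icc a b) : w x = v x := IccExtend_of_mem hab _ hx
  have hwC (x : ℝ) : ‖w x‖ ≤ C.toNNReal := (hC _ (projIcc a b hab x).2).trans (le_coe_toNNReal C)
  obtain ⟨f, hf₀, hf⟩ :=
    exists_forall_mem_Ici_hasDerivWithinAt_of_lipschitzWith_of_norm_le hw hwC x₀
  have hmem : ∀ t ∈ Ici (0 : ℝ), f t ∈ Icc a b := fun t ht =>
    ⟨le_of_hasDerivWithinAt_Ici_of_deriv_nonneg hf (fun s _ hs => hwa _ hs ▸ ha)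
        (hf₀ ▸ hx₀.1) t ht,
      le_of_hasDerivWithinAt_Ici_of_deriv_nonpos hf (fun s _ hs => hwb _ hs ▸ hb)
        (hf₀ ▸ hx₀.2) t ht⟩
  refine ⟨f, hf₀, fun t ht => ⟨hmem t ht, ?_⟩⟩
  rw [← hwv _ (hmem t ht)]
  exact hf t ht

noncomputable def expDrift (pA pB g u : ℝ) : ℝ := pB * (exp (g * u) - 1) / g - pA * u

section ExpDrift

variable {pA pB g : ℝ}

theorem expDrift_zero : expDrift pA pB g 0 = 0 := by simp [expDrift]

theorem contDiff_expDrift : ContDiff ℝ 1 (expDrift pA pB g) := by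
  unfold expDrift; fun_prop

theorem sub_mul_le_expDrift (hpB : 0 ≤ pB) (hg : 0 < g) (u : ℝ) :
    (pB - pA) * u ≤ expDrift pA pB g u := by
  have h : u ≤ (exp (g * u) - 1) / g := by
    rw [le_div_iff₀ hg]; linarith [add_one_le_exp (g * u)]
  have := mul_le_mul_of_nonneg_left h hpB
  rw [expDrift, mul_div_assoc]; linarith

theorem monotoneOn_mul_exp_of_hasDerivWithinAt_expDrift (hpB : 0 ≤ pB) (hg : 0 < g)
    {ψ : ℝ → ℝ} (hψ : ∀ t ∈ Ici (0 : ℝ), HasDerivWithinAt ψ (expDrift pA pB g (ψ t)) (Ici 0) t) :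
    MonotoneOn (fun t => ψ t * exp ((pA - pB) * t)) (Ici 0) := by
  have hW (t : ℝ) (ht : t ∈ Ici (0 : ℝ)) : HasDerivWithinAt (fun t => ψ t * exp ((pA - pB) * t))
      ((expDrift pA pB g (ψ t) + (pA - pB) * ψ t) * exp ((pA - pB) * t)) (Ici 0) t := by
    have hexp : HasDerivAt (fun t => exp ((pA - pB) * t)) (exp ((pA - pB) * t) * (pA - pB)) t :=
      by simpa using ((hasDerivAt_id t).const_mul (pA - pB)).exp
    exact ((hψ t ht).mul hexp.hasDerivWithinAt).congr_deriv (by ring)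
  refine monotoneOn_of_hasDerivWithinAt_nonneg (convex_Ici 0)
    (f' := fun t => (expDrift pA pB g (ψ t) + (pA - pB) * ψ t) * exp ((pA - pB) * t))
    (fun t ht => (hW t ht).continuousWithinAt) (fun t ht => ?_) (fun t _ => ?_)
  · rw [interior_Ici] at ht
    exact (hW t (mem_Ici.2 ht.le)).mono interior_subset
  · have := sub_mul_le_expDrift (pA := pA) hpB hg (ψ t)
    exact mul_nonneg (by linarith) (exp_pos _).le

end ExpDrift

theorem stmt_15_general
    (pA pB g : ℝ) (hpB : 0 < pB) (hpBA : pB ≤ pA) (hg : 0 < g)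
    (ψ0 : ℝ) (hψ0 : ψ0 ≤ 0) :
    ∃ ψ : ℝ → ℝ, ψ 0 = ψ0
      ∧ (∀ t ∈ Set.Ici (0:ℝ),
          HasDerivWithinAt ψ (pB * (Real.exp (g * ψ t) - 1) / g - pA * ψ t) (Set.Ici 0) t)
      ∧ (∀ φ : ℝ → ℝ, φ 0 = ψ0 →
          (∀ t ∈ Set.Ici (0:ℝ),
            HasDerivWithinAt φ (pB * (Real.exp (g * φ t) - 1) / g - pA * φ t) (Set.Ici 0) t) →
          ∀ t ∈ Set.Ici (0:ℝ), φ t = ψ t)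
      ∧ ∀ t ∈ Set.Ici (0:ℝ),
          ψ0 ≤ ψ t * Real.exp ((pA - pB) * t) ∧ ψ t * Real.exp ((pA - pB) * t) ≤ 0 := by
  have hlip : LocallyLipschitz (expDrift pA pB g) := contDiff_expDrift.locallyLipschitz
  have hdrift_ψ0 : 0 ≤ expDrift pA pB g ψ0 :=
    (mul_nonneg_of_nonpos_of_nonpos (by linarith) hψ0).trans (sub_mul_le_expDrift hpB.le hg ψ0)
  obtain ⟨ψ, hψ₀, hψ⟩ := exists_forall_mem_Ici_hasDerivWithinAt_of_mem_Icc hlip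
    ⟨le_rfl, hψ0⟩ hdrift_ψ0 expDrift_zero.le
  have hderiv : ∀ t ∈ Ici (0 : ℝ), HasDerivWithinAt ψ (expDrift pA pB g (ψ t)) (Ici 0) t :=
    fun t ht => (hψ t ht).2
  refine ⟨ψ, hψ₀, hderiv, fun φ hφ₀ hφ t ht =>
    eqOn_Ici_of_hasDerivWithinAt_of_locallyLipschitz hlip hφ hderiv (hφ₀.trans hψ₀.symm) ht,
    fun t ht => ⟨?_, mul_nonpos_of_nonpos_of_nonneg (hψ t ht).1.2 (exp_pos _).le⟩⟩
  simpa [hψ₀] using monotoneOn_mul_exp_of_hasDerivWithinAt_expDrift hpB.le hg hderiv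
    self_mem_Ici ht ht

theorem stmt_15
    (pA pB g : ℝ) (hpB : 0 < pB) (hpBA : pB ≤ pA) (hpA : pA < 1) (hg : 0 < g)
    (ψ0 : ℝ) (hψ0 : ψ0 ≤ 0) :
    ∃ ψ : ℝ → ℝ, ψ 0 = ψ0
      ∧ (∀ t ∈ Set.Ici (0:ℝ),
          HasDerivWithinAt ψ (pB * (Real.exp (g * ψ t) - 1) / g - pA * ψ t) (Set.Ici 0) t)
      ∧ (∀ φ : ℝ → ℝ, φ 0 = ψ0 →
          (∀ t ∈ Set.Ici (0:ℝ),
            HasDerivWithinAt φ (pB * (Real.exp (g * φ t) - 1) / g - pA * φ t) (Set.Ici 0) t) →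
          ∀ t ∈ Set.Ici (0:ℝ), φ t = ψ t)
      ∧ ∀ t ∈ Set.Ici (0:ℝ),
          ψ0 ≤ ψ t * Real.exp ((pA - pB) * t) ∧ ψ t * Real.exp ((pA - pB) * t) ≤ 0 :=
  stmt_15_general pA pB g hpB hpBA hg ψ0 hψ0
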